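/- Let Z be a rotationally invariant random vector on ℝ^d with appropriate exponential moments, B ∈ ℝ^{d×d} invertible, and X := BZ with Σ := BBᵀ. Then for every p ≠ 0 with Bᵀp ≠ 0, the tilted mean m(p) := E[X exp(pᵀX)]/E[exp(pᵀX)] equals γ·Σp for some scalar γ > 0 depending on B only through ‖Bᵀp‖² = pᵀΣp. -/

import Mathlib

/-!
Since `⟪p, B z⟫ = ⟪Bᵀp, z⟫`, the tilted mean of `BZ` at `p` is `B` applied to the tilted mean
`m(w)` of `Z` at `w = Bᵀp`. Rotation invariance of `Z` makes `m` equivariant, `m(Rw) = R m(w)`.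
Applied to the reflection in the line `ℝw`, which fixes `w`, this puts `m(w)` on that line, so
`m(w) = γ(w) w` with `γ(w) = ⟪w, m(w)⟫ / ‖w‖²`; applied to a rotation taking `w` to `w'` with
`‖w‖ = ‖w'‖`, it shows `γ(w) = γ(w')`. Finally `γ(w) > 0`: as `⟪w, Z⟫` is symmetric and not a.s.
zero, `E[⟪w, Z⟫ exp ⟪w, Z⟫] = E[⟪w, Z⟫ sinh ⟪w, Z⟫] > 0`.
-/

open MeasureTheory Real
open scoped RealInnerProductSpace

section

variable {Ω : Type*} [MeasurableSpace Ω] {μ : Measure Ω}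

theorem self_mul_sinh_nonneg (t : ℝ) : 0 ≤ t * sinh t := by
  rcases le_total 0 t with ht | ht
  · exact mul_nonneg ht (sinh_nonneg_iff.2 ht)
  · exact mul_nonneg_of_nonpos_of_nonpos ht (sinh_nonpos_iff.2 ht)

theorem self_mul_sinh_eq (t : ℝ) : t * sinh t = (exp t * t + exp (-t) * -t) / 2 := by
  rw [sinh_eq]; ring

theorem integral_exp_mul_pos_of_map_neg_eq {T : Ω → ℝ} (hT : AEMeasurable T μ)
    (hsym : μ.map (fun ω => -T ω) = μ.map T) (hT0 : ¬ T =ᵐ[μ] 0)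
    (hint : Integrable (fun ω => exp (T ω) * T ω) μ) :
    0 < ∫ ω, exp (T ω) * T ω ∂μ := by
  have hg : Continuous fun t : ℝ => exp t * t := by fun_prop
  have hTneg : AEMeasurable (fun ω => -T ω) μ := hT.neg
  have hint_neg : Integrable (fun ω => exp (-T ω) * -T ω) μ :=
    (integrable_map_measure hg.aestronglyMeasurable hTneg).1
      (hsym ▸ (integrable_map_measure hg.aestronglyMeasurable hT).2 hint)
  have hsym_int : ∫ ω, exp (-T ω) * -T ω ∂μ = ∫ ω, exp (T ω) * T ω ∂μ := by
    rw [← integral_map hTneg hg.aestronglyMeasurable, hsym,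
      integral_map hT hg.aestronglyMeasurable]
  have heven : ∫ ω, exp (T ω) * T ω ∂μ = ∫ ω, T ω * sinh (T ω) ∂μ := by
    simp_rw [self_mul_sinh_eq]
    rw [integral_div, integral_add hint hint_neg, hsym_int]
    ring
  have hint_even : Integrable (fun ω => T ω * sinh (T ω)) μ := by
    simp_rw [self_mul_sinh_eq]
    exact (hint.add hint_neg).div_const 2
  have hsupp : Function.support (fun ω => T ω * sinh (T ω)) = Function.support T := by
    ext ω
    simp
  rw [heven, integral_pos_iff_support_of_nonneg_ae
    (Filter.Eventually.of_forall fun ω => self_mul_sinh_nonneg (T ω)) hint_even, hsupp]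
  exact pos_iff_ne_zero.2 hT0

section Rotation

variable {E F : Type*} [NormedAddCommGroup E] [InnerProductSpace ℝ E]

theorem exists_linearIsometryEquiv_apply_eq {v w : E} (h : ‖v‖ = ‖w‖) :
    ∃ R : E ≃ₗᵢ[ℝ] E, R v = w :=
  ⟨(ℝ ∙ (v - w))ᗮ.reflection, Submodule.reflection_sub h⟩

variable [MeasurableSpace E] [BorelSpace E]

def IsRotationInvariant (μ : Measure Ω) (Z : Ω → E) : Prop :=
  ∀ R : E ≃ₗᵢ[ℝ] E, μ.map (fun ω => R (Z ω)) = μ.map Z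

variable {Z : Ω → E}

namespace IsRotationInvariant

theorem integral_comp [NormedAddCommGroup F] [NormedSpace ℝ F] (hrot : IsRotationInvariant μ Z)
    (hZ : AEMeasurable Z μ) (R : E ≃ₗᵢ[ℝ] E) {f : E → F}
    (hf : AEStronglyMeasurable f (μ.map Z)) : ∫ ω, f (R (Z ω)) ∂μ = ∫ ω, f (Z ω) ∂μ := by
  have hRZ : AEMeasurable (fun ω => R (Z ω)) μ := R.continuous.aemeasurable.comp_aemeasurable hZ
  rw [← integral_map hRZ (hrot R ▸ hf), hrot R, integral_map hZ hf]

theorem ae_comp (hrot : IsRotationInvariant μ Z) (hZ : AEMeasurable Z μ) (R : E ≃ₗᵢ[ℝ] E)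
    {p : E → Prop} (hp : MeasurableSet {x | p x}) :
    (∀ᵐ ω ∂μ, p (R (Z ω))) ↔ ∀ᵐ ω ∂μ, p (Z ω) := by
  have hRZ : AEMeasurable (fun ω => R (Z ω)) μ := R.continuous.aemeasurable.comp_aemeasurable hZ
  rw [← ae_map_iff hZ hp, ← hrot R, ae_map_iff hRZ hp]

theorem map_neg_inner (hrot : IsRotationInvariant μ Z) (hZ : AEMeasurable Z μ) (w : E) :
    μ.map (fun ω => -⟪w, Z ω⟫) = μ.map (fun ω => ⟪w, Z ω⟫) := by
  let R : E ≃ₗᵢ[ℝ] E := LinearIsometryEquiv.neg ℝ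
  have hRZ : AEMeasurable (fun ω => R (Z ω)) μ := R.continuous.aemeasurable.comp_aemeasurable hZ
  have hg : Measurable fun z : E => ⟪w, z⟫ := by fun_prop
  have hneg : (fun ω => -⟪w, Z ω⟫) = (fun z => ⟪w, z⟫) ∘ fun ω => R (Z ω) := by
    ext ω; simp [R]
  rw [hneg, ← AEMeasurable.map_map_of_aemeasurable hg.aemeasurable hRZ, hrot R,
    AEMeasurable.map_map_of_aemeasurable hg.aemeasurable hZ]
  rfl

theorem ae_eq_zero_of_ae_inner_eq_zero [FiniteDimensional ℝ E] (hrot : IsRotationInvariant μ Z)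
    (hZ : AEMeasurable Z μ) {w : E} (hw : w ≠ 0) (h : ∀ᵐ ω ∂μ, ⟪w, Z ω⟫ = 0) :
    ∀ᵐ ω ∂μ, Z ω = 0 := by
  set u := ‖w‖⁻¹ • w
  have hu : ∀ᵐ ω ∂μ, ⟪u, Z ω⟫ = 0 := h.mono fun ω hω => by simp [u, real_inner_smul_left, hω]
  let b := stdOrthonormalBasis ℝ E
  have hb : ∀ i, ∀ᵐ ω ∂μ, ⟪b i, Z ω⟫ = 0 := by
    intro i
    obtain ⟨R, hR⟩ := exists_linearIsometryEquiv_apply_eq (v := u) (w := b i)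
      ((norm_smul_inv_norm hw).trans (b.orthonormal.1 i).symm)
    rw [← hrot.ae_comp hZ R (p := fun z => ⟪b i, z⟫ = 0)
      (measurableSet_eq_fun (by fun_prop) measurable_const)]
    simpa only [← hR, LinearIsometryEquiv.inner_map_map] using hu
  filter_upwards [ae_all_iff.2 hb] with ω hω
  exact InnerProductSpace.ext_inner_left_basis b.toBasis fun i => by simpa using hω i

end IsRotationInvariant

end Rotation

noncomputable section TiltedMean

variable {E F : Type*} [NormedAddCommGroup E] [InnerProductSpace ℝ E] {Z : Ω → E}

def tiltedMean (μ : Measure Ω) (Z : Ω → E) (w : E) : E :=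
  (∫ ω, exp ⟪w, Z ω⟫ ∂μ)⁻¹ • ∫ ω, exp ⟪w, Z ω⟫ • Z ω ∂μ

def tiltGain (μ : Measure Ω) (Z : Ω → E) (w : E) : ℝ :=
  ⟪w, tiltedMean μ Z w⟫ / ‖w‖ ^ 2

theorem tiltedMean_comp_clm [CompleteSpace E] [NormedAddCommGroup F] [InnerProductSpace ℝ F]
    [CompleteSpace F] (A : E →L[ℝ] F) (p : F)
    (hint : Integrable (fun ω => exp ⟪A.adjoint p, Z ω⟫ • Z ω) μ) :
    tiltedMean μ (fun ω => A (Z ω)) p = A (tiltedMean μ Z (A.adjoint p)) := by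
  simp_rw [tiltedMean, ← ContinuousLinearMap.adjoint_inner_left, ← map_smul,
    A.integral_comp_comm hint]
  rw [map_smul]

variable [MeasurableSpace E] [BorelSpace E]

section SecondCountable

variable [SecondCountableTopology E]

theorem integrable_exp_inner_smul (hZ : AEMeasurable Z μ) {w : E}
    (hint : Integrable (fun ω => ‖Z ω‖ * exp ⟪w, Z ω⟫) μ) :
    Integrable (fun ω => exp ⟪w, Z ω⟫ • Z ω) μ := by
  refine hint.mono' ((by fun_prop : Continuous fun z : E => exp ⟪w, z⟫ • z)
    |>.comp_aestronglyMeasurable hZ.aestronglyMeasurable) (ae_of_all _ fun ω => ?_)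
  rw [norm_smul, Real.norm_of_nonneg (exp_pos _).le, mul_comm]

namespace IsRotationInvariant

theorem tiltedMean_map (hrot : IsRotationInvariant μ Z) (hZ : AEMeasurable Z μ)
    (R : E ≃ₗᵢ[ℝ] E) (w : E) : tiltedMean μ Z (R w) = R (tiltedMean μ Z w) := by
  have hnorm : ∫ ω, exp ⟪R w, Z ω⟫ ∂μ = ∫ ω, exp ⟪w, Z ω⟫ ∂μ := by
    rw [← hrot.integral_comp hZ R
      (by fun_prop : Continuous fun z => exp ⟪R w, z⟫).aestronglyMeasurable]
    simp_rw [LinearIsometryEquiv.inner_map_map]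
  have hmom : ∫ ω, exp ⟪R w, Z ω⟫ • Z ω ∂μ = R (∫ ω, exp ⟪w, Z ω⟫ • Z ω ∂μ) := by
    have hcomm := R.toContinuousLinearEquiv.integral_comp_comm (μ := μ)
      fun ω => exp ⟪w, Z ω⟫ • Z ω
    rw [← hrot.integral_comp hZ R
      (by fun_prop : Continuous fun z => exp ⟪R w, z⟫ • z).aestronglyMeasurable]
    simpa only [LinearIsometryEquiv.inner_map_map, LinearIsometryEquiv.coe_toContinuousLinearEquiv,
      map_smul] using hcomm
  rw [tiltedMean, tiltedMean, hnorm, hmom, map_smul]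

theorem tiltedMean_mem_span_singleton (hrot : IsRotationInvariant μ Z) (hZ : AEMeasurable Z μ)
    (w : E) : tiltedMean μ Z w ∈ ℝ ∙ w := by
  have hw : (ℝ ∙ w).reflection w = w :=
    Submodule.reflection_mem_subspace_eq_self (Submodule.mem_span_singleton_self w)
  rw [← Submodule.reflection_eq_self_iff, ← hrot.tiltedMean_map hZ, hw]

theorem tiltedMean_eq_tiltGain_smul (hrot : IsRotationInvariant μ Z) (hZ : AEMeasurable Z μ)
    (w : E) : tiltedMean μ Z w = tiltGain μ Z w • w := by
  rw [← Submodule.starProjection_eq_self_iff.2 (hrot.tiltedMean_mem_span_singleton hZ w),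
    Submodule.starProjection_singleton]
  simp [tiltGain]

theorem tiltGain_factorsThrough (hrot : IsRotationInvariant μ Z) (hZ : AEMeasurable Z μ) :
    (tiltGain μ Z).FactorsThrough (norm : E → ℝ) := by
  intro v w h
  obtain ⟨R, rfl⟩ := exists_linearIsometryEquiv_apply_eq h.symm
  rw [tiltGain, tiltGain, hrot.tiltedMean_map hZ, LinearIsometryEquiv.inner_map_map,
    LinearIsometryEquiv.norm_map]

end IsRotationInvariant

end SecondCountable

theorem IsRotationInvariant.tiltGain_pos [FiniteDimensional ℝ E] [NeZero μ]
    (hrot : IsRotationInvariant μ Z) (hZ : AEMeasurable Z μ) (hne : ∀ᵐ ω ∂μ, Z ω ≠ 0) {w : E}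
    (hw : w ≠ 0) (hint₀ : Integrable (fun ω => exp ⟪w, Z ω⟫) μ)
    (hint₁ : Integrable (fun ω => ‖Z ω‖ * exp ⟪w, Z ω⟫) μ) : 0 < tiltGain μ Z w := by
  have := FiniteDimensional.complete ℝ E
  have hsmul := integrable_exp_inner_smul hZ hint₁
  have hT0 : ¬ (fun ω => ⟪w, Z ω⟫) =ᵐ[μ] 0 := fun h => by
    obtain ⟨ω, hZ0, hZne⟩ := ((hrot.ae_eq_zero_of_ae_inner_eq_zero hZ hw h).and hne).exists
    exact hZne hZ0
  have hpos : 0 < ∫ ω, exp ⟪w, Z ω⟫ * ⟪w, Z ω⟫ ∂μ :=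
    integral_exp_mul_pos_of_map_neg_eq (by fun_prop) (hrot.map_neg_inner hZ w) hT0
      (by simpa only [real_inner_smul_right] using hsmul.const_inner (𝕜 := ℝ) w)
  have hinner : ⟪w, tiltedMean μ Z w⟫
      = (∫ ω, exp ⟪w, Z ω⟫ ∂μ)⁻¹ * ∫ ω, exp ⟪w, Z ω⟫ * ⟪w, Z ω⟫ ∂μ := by
    simp_rw [tiltedMean, real_inner_smul_right, ← integral_inner hsmul, real_inner_smul_right]
  rw [tiltGain, hinner]
  exact div_pos (mul_pos (inv_pos.2 (integral_exp_pos hint₀)) hpos) (by positivity)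

end TiltedMean

end

theorem stmt_8_general {d : ℕ} {Ω : Type*} [MeasurableSpace Ω]
    (μ : Measure Ω) [IsProbabilityMeasure μ]
    (Z : Ω → EuclideanSpace ℝ (Fin d)) (hZm : AEMeasurable Z μ)
    (hrot : ∀ R : EuclideanSpace ℝ (Fin d) ≃ₗᵢ[ℝ] EuclideanSpace ℝ (Fin d),
      Measure.map (fun ω => R (Z ω)) μ = Measure.map Z μ)
    (hne : ∀ᵐ ω ∂μ, Z ω ≠ 0)
    (B : EuclideanSpace ℝ (Fin d) →L[ℝ] EuclideanSpace ℝ (Fin d))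
    (hmom : ∀ u : EuclideanSpace ℝ (Fin d),
      Integrable (fun ω => Real.exp ⟪u, Z ω⟫) μ ∧
      Integrable (fun ω => ‖Z ω‖ * Real.exp ⟪u, Z ω⟫) μ) :
    ∃ γ : ℝ → ℝ, ∀ p : EuclideanSpace ℝ (Fin d), p ≠ 0 →
      ContinuousLinearMap.adjoint B p ≠ 0 →
      0 < γ ‖ContinuousLinearMap.adjoint B p‖ ∧
      (∫ ω, Real.exp ⟪p, B (Z ω)⟫ ∂μ)⁻¹ • (∫ ω, Real.exp ⟪p, B (Z ω)⟫ • B (Z ω) ∂μ) =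
        γ ‖ContinuousLinearMap.adjoint B p‖ • B (ContinuousLinearMap.adjoint B p) := by
  replace hrot : IsRotationInvariant μ Z := hrot
  refine ⟨Function.extend norm (tiltGain μ Z) 1, fun p _ hw => ?_⟩
  rw [(hrot.tiltGain_factorsThrough hZm).extend_apply]
  refine ⟨hrot.tiltGain_pos hZm hne hw (hmom _).1 (hmom _).2, ?_⟩
  change tiltedMean μ (fun ω => B (Z ω)) p = _
  rw [tiltedMean_comp_clm B p (integrable_exp_inner_smul hZm (hmom _).2),
    hrot.tiltedMean_eq_tiltGain_smul hZm, map_smul]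

/-- Joint-covariance limit under elliptical inputs: if `X = B Z` with `Z` rotationally
invariant (not a.s. zero) and `B` invertible, then the tilted mean
`m(p) = E[X exp⟪p,X⟫]/E[exp⟪p,X⟫]` equals `γ • Σ p` with `Σ = B Bᵀ`, where the positive
scalar `γ` depends on `B` only through `‖Bᵀ p‖` (equivalently through `pᵀ Σ p`). -/
theorem stmt_8 {d : ℕ} {Ω : Type*} [MeasurableSpace Ω]
    (μ : Measure Ω) [IsProbabilityMeasure μ]
    (Z : Ω → EuclideanSpace ℝ (Fin d)) (hZm : AEMeasurable Z μ)
    (hrot : ∀ R : EuclideanSpace ℝ (Fin d) ≃ₗᵢ[ℝ] EuclideanSpace ℝ (Fin d),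
      Measure.map (fun ω => R (Z ω)) μ = Measure.map Z μ)
    (hne : ∀ᵐ ω ∂μ, Z ω ≠ 0)
    (B : EuclideanSpace ℝ (Fin d) →L[ℝ] EuclideanSpace ℝ (Fin d))
    (hB : Function.Bijective B)
    (hmom : ∀ u : EuclideanSpace ℝ (Fin d),
      Integrable (fun ω => Real.exp ⟪u, Z ω⟫) μ ∧
      Integrable (fun ω => ‖Z ω‖ * Real.exp ⟪u, Z ω⟫) μ) :
    ∃ γ : ℝ → ℝ, ∀ p : EuclideanSpace ℝ (Fin d), p ≠ 0 →
      ContinuousLinearMap.adjoint B p ≠ 0 →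
      0 < γ ‖ContinuousLinearMap.adjoint B p‖ ∧
      (∫ ω, Real.exp ⟪p, B (Z ω)⟫ ∂μ)⁻¹ • (∫ ω, Real.exp ⟪p, B (Z ω)⟫ • B (Z ω) ∂μ) =
        γ ‖ContinuousLinearMap.adjoint B p‖ • B (ContinuousLinearMap.adjoint B p) :=
  stmt_8_general μ Z hZm hrot hne B hmom
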